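/- Let λ ∈ SC^(m) be a self-conjugate partition and μ its corresponding partition under the bijection φ^(m). If the largest main diagonal hook length δ_1 of λ is ≡ 1 mod 4, then the set of halved even first-column hook lengths of λ, β_{e/2}(λ) = {h_λ(i,1)/2 : h_λ(i,1) even}, equals the beta-set β(μ') of the conjugate of μ; if δ_1 ≡ 3 mod 4, then β_{e/2}(λ) = β(μ). -/

import Mathlib

/-- A partition, encoded as an antitone, eventually-zero function (0-indexed parts). -/
def IsPartition (l : ℕ → ℕ) : Prop := Antitone l ∧ ∃ N, l N = 0

/-- The conjugate partition: `conj l j` is the number of rows whose length exceeds `j`. -/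
noncomputable def conj (l : ℕ → ℕ) (j : ℕ) : ℕ := Set.ncard {i | j < l i}

/-- Hook length of the box in row `i`, column `j` (0-indexed): arm + leg + 1. -/
noncomputable def hookLen (l : ℕ → ℕ) (i j : ℕ) : ℕ :=
  (l i - (j + 1)) + (conj l j - (i + 1)) + 1

/-- A self-conjugate partition equals its conjugate. -/
def SelfConj (l : ℕ → ℕ) : Prop := conj l = l

/-- Side length of the Durfee square: the number of boxes on the main diagonal. -/
noncomputable def durfee (l : ℕ → ℕ) : ℕ := Set.ncard {i | i < l i}

/-- The number of boxes of the Young diagram. -/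
noncomputable def psize (l : ℕ → ℕ) : ℕ := Set.ncard {p : ℕ × ℕ | p.2 < l p.1}

/-- The disparity: (#boxes with odd hook length) - (#boxes with even hook length). -/
noncomputable def dp (l : ℕ → ℕ) : ℤ :=
  (Set.ncard {p : ℕ × ℕ | p.2 < l p.1 ∧ Odd (hookLen l p.1 p.2)} : ℤ) -
  (Set.ncard {p : ℕ × ℕ | p.2 < l p.1 ∧ Even (hookLen l p.1 p.2)} : ℤ)

/-- The set of main diagonal hook lengths. -/
def Dset (l : ℕ → ℕ) : Set ℕ := {x | ∃ i, i < l i ∧ x = hookLen l i i}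

/-- Main diagonal hook lengths congruent to 1 mod 4. -/
def D1 (l : ℕ → ℕ) : Set ℕ := {x ∈ Dset l | x % 4 = 1}

/-- Main diagonal hook lengths congruent to 3 mod 4. -/
def D3 (l : ℕ → ℕ) : Set ℕ := {x ∈ Dset l | x % 4 = 3}

/-- A `t`-core partition: no hook length is divisible by `t`. -/
def IsCore (l : ℕ → ℕ) (t : ℕ) : Prop := ∀ i j, j < l i → ¬ (t ∣ hookLen l i j)

/-- `(a,b)` (restricted to indices `< r`, `< s`) is the diagonal sequence pair of the
self-conjugate partition `l`: `D1 l = {4 a i + 1}` with `a` strictly decreasing, and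
`D3 l = {4 b j - 1}` with `b` strictly decreasing and positive. -/
def DiagPair (l : ℕ → ℕ) (r s : ℕ) (a b : ℕ → ℕ) : Prop :=
  StrictAntiOn a (Set.Iio r) ∧ StrictAntiOn b (Set.Iio s) ∧
  (∀ j, j < s → 1 ≤ b j) ∧
  D1 l = {x | ∃ i, i < r ∧ x = 4 * a i + 1} ∧
  D3 l = {x | ∃ j, j < s ∧ x = 4 * b j - 1}

/-- `μ` is the image of the diagonal sequence pair `((a),(b))` under the map `φ`:
the first `r` parts are `a i + (i+1) + s - r` (1-indexed `a_i + i + s - r`), and the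
remaining parts form the conjugate of `γ = (b 0 - s, b 1 - s + 1, …, b (s-1) - 1)`. -/
def PhiImage (r s : ℕ) (a b : ℕ → ℕ) (μ : ℕ → ℕ) : Prop :=
  (∀ i, i < r → (μ i : ℤ) = (a i : ℤ) + (i + 1) + s - r) ∧
  (∀ i, r ≤ i → μ i = Set.ncard {j | j < s ∧ i - r < b j + j - s})

/-- `μ` is the corresponding partition of the self-conjugate partition `l`
under the bijection `φ` of Cho–Huh–Sohn. -/
def Corresponds (l μ : ℕ → ℕ) : Prop :=
  ∃ r s a b, DiagPair l r s a b ∧ PhiImage r s a b μ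

/-!
Everything is read off the set `S p = {p i - i}` of shifted parts. The first-column hook
lengths of `p` are `S p` translated by `conj p 0 - 1`, and `S (conj p) = {1 - u | u ∉ S p}`.
For self-conjugate `l` the diagonal hook through row `i` is `2 (l i - i) - 1`, so the positive
part of `S l` is `{2 a i + 1} ∪ {2 b j}`, and self-duality fixes the rest. The map `φ` is built so
that `S μ`, translated by `r - s`, is `{a i + 1} ∪ {v ≤ 0 | 1 - v ∉ {b j}}`. Comparing the two
descriptions, the halved even first-column hooks of `l` are `β μ` when `l 0` is even, and, after
one more application of the duality, `β (conj μ)` when `l 0` is odd.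
-/

def shiftedParts (p : ℕ → ℕ) : Set ℤ := {u | ∃ i, (p i : ℤ) - i = u}

def beta (p : ℕ → ℕ) : Set ℕ := {x | ∃ i, i < conj p 0 ∧ x = hookLen p i 0}

def halfEvenBeta (p : ℕ → ℕ) : Set ℕ :=
  {x | ∃ i, i < conj p 0 ∧ Even (hookLen p i 0) ∧ x = hookLen p i 0 / 2}

namespace IsPartition

variable {p : ℕ → ℕ}

theorem eventually_zero (hp : IsPartition p) : ∃ N, ∀ n, N ≤ n → p n = 0 :=
  let ⟨N, hN⟩ := hp.2
  ⟨N, fun _ hn => Nat.eq_zero_of_le_zero (hN ▸ hp.1 hn)⟩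

theorem lt_conj_iff (hp : IsPartition p) {i j : ℕ} : i < conj p j ↔ j < p i := by
  obtain ⟨N, hN⟩ := hp.2
  have hex : ∃ k, p k ≤ j := ⟨N, by omega⟩
  have hrows : ∀ i, i < Nat.find hex ↔ j < p i := fun i =>
    ⟨fun hi => not_le.1 (Nat.find_min hex hi),
      fun h => by_contra fun hi => (Nat.find_spec hex).not_gt (h.trans_le (hp.1 (not_lt.1 hi)))⟩
  have hcol : {i | j < p i} = Set.Iio (Nat.find hex) := Set.ext fun i => (hrows i).symm
  rw [conj, hcol, Set.ncard_Iio_nat, hrows]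

protected theorem conj (hp : IsPartition p) : IsPartition (conj p) :=
  ⟨fun _ _ hjj' => le_of_forall_lt fun _ hi =>
      hp.lt_conj_iff.2 (hjj'.trans_lt (hp.lt_conj_iff.1 hi)),
    ⟨p 0, Nat.eq_zero_of_not_pos fun h => lt_irrefl _ (hp.lt_conj_iff.1 h)⟩⟩

theorem conj_conj (hp : IsPartition p) : conj (conj p) = p :=
  funext fun _ => eq_of_forall_lt_iff fun _ => by rw [hp.conj.lt_conj_iff, hp.lt_conj_iff]

theorem hookLen_conj (hp : IsPartition p) (i j : ℕ) : hookLen (conj p) i j = hookLen p j i := by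
  unfold hookLen
  rw [hp.conj_conj]
  omega

theorem beta_conj (hp : IsPartition p) :
    beta (conj p) = {x | ∃ j, j < p 0 ∧ x = hookLen p 0 j} := by
  simp only [beta, hp.conj_conj, hp.hookLen_conj]

theorem le_of_mem_shiftedParts (hp : IsPartition p) {u : ℤ} (hu : u ∈ shiftedParts p) :
    u ≤ p 0 := by
  obtain ⟨i, rfl⟩ := hu
  have := hp.1 (Nat.zero_le i)
  omega

theorem not_mem_shiftedParts_conj (hp : IsPartition p) {u : ℤ} (hu : u ∈ shiftedParts p) :
    1 - u ∉ shiftedParts (conj p) := by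
  rintro ⟨j, hj⟩
  obtain ⟨i, rfl⟩ := hu
  have := hp.lt_conj_iff (i := i) (j := j)
  omega

theorem one_sub_mem_shiftedParts_conj (hp : IsPartition p) {u : ℤ} (hu : u ∉ shiftedParts p) :
    1 - u ∈ shiftedParts (conj p) := by
  obtain ⟨N, hN⟩ := hp.eventually_zero
  have hex : ∃ k, (p k : ℤ) - k < u := ⟨N + (1 - u).toNat, by rw [hN _ (by omega)]; omega⟩
  obtain ⟨k, hk, hmin⟩ : ∃ k, (p k : ℤ) - k < u ∧ ∀ i < k, u < (p i : ℤ) - i :=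
    ⟨Nat.find hex, Nat.find_spec hex, fun i hi =>
      lt_of_le_of_ne (not_lt.1 (Nat.find_min hex hi)) fun h => hu ⟨i, h.symm⟩⟩
  -- the `k` rows above the first row with `p k - k < u` are exactly those longer than `u + k - 1`
  have hcol : conj p (u + k - 1).toNat = k := eq_of_forall_lt_iff fun i => by
    rw [hp.lt_conj_iff]
    constructor
    · intro h
      by_contra! hki
      have := hp.1 hki
      omega
    · intro hi
      have := hp.1 (Nat.le_sub_one_of_lt hi)
      have := hmin (k - 1) (by omega)
      omega
  exact ⟨(u + k - 1).toNat, by rw [hcol]; omega⟩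

theorem mem_shiftedParts_iff (hp : IsPartition p) (u : ℤ) :
    u ∈ shiftedParts p ↔ 1 - u ∉ shiftedParts (conj p) :=
  ⟨hp.not_mem_shiftedParts_conj, fun h => by_contra fun hu => h (hp.one_sub_mem_shiftedParts_conj hu)⟩

theorem mem_shiftedParts_conj_iff (hp : IsPartition p) (u : ℤ) :
    u ∈ shiftedParts (conj p) ↔ 1 - u ∉ shiftedParts p := by
  rw [hp.conj.mem_shiftedParts_iff, hp.conj_conj]

theorem mem_beta_iff (hp : IsPartition p) (x : ℕ) :
    x ∈ beta p ↔ (x : ℤ) + 1 - conj p 0 ∈ shiftedParts p := by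
  constructor
  · rintro ⟨i, hi, rfl⟩
    have := hp.lt_conj_iff.1 hi
    exact ⟨i, by rw [hookLen]; omega⟩
  · rintro ⟨i, hi⟩
    have := hp.lt_conj_iff (i := i) (j := 0)
    exact ⟨i, by omega, by rw [hookLen]; omega⟩

theorem mem_halfEvenBeta_iff (hp : IsPartition p) (x : ℕ) :
    x ∈ halfEvenBeta p ↔ 2 * (x : ℤ) + 1 - conj p 0 ∈ shiftedParts p := by
  have key : x ∈ halfEvenBeta p ↔ 2 * x ∈ beta p :=
    exists_congr fun i => and_congr_right fun _ =>
      ⟨fun ⟨⟨c, hc⟩, hx⟩ => by omega, fun h => ⟨⟨x, by omega⟩, by omega⟩⟩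
  rw [key, hp.mem_beta_iff]
  push_cast
  rfl

theorem mem_shiftedParts_of_le (hp : IsPartition p) {u : ℤ} (hu : u ≤ -conj p 0) :
    u ∈ shiftedParts p := by
  have := hp.lt_conj_iff (i := (-u).toNat) (j := 0)
  exact ⟨(-u).toNat, by omega⟩

theorem one_sub_conj_zero_not_mem (hp : IsPartition p) :
    1 - (conj p 0 : ℤ) ∉ shiftedParts p := by
  intro h
  obtain ⟨i, -, hi⟩ := (hp.mem_beta_iff 0).2 (by simpa using h)
  rw [hookLen] at hi
  omega

theorem conj_zero_eq_of (hp : IsPartition p) {n : ℤ} (hn : 1 - n ∉ shiftedParts p)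
    (hle : ∀ u ≤ -n, u ∈ shiftedParts p) : (conj p 0 : ℤ) = n := by
  rcases lt_trichotomy (conj p 0 : ℤ) n with h | h | h
  · exact absurd (hp.mem_shiftedParts_of_le (by omega)) hn
  · exact h
  · exact absurd (hle _ (by omega)) hp.one_sub_conj_zero_not_mem

end IsPartition

theorem StrictAntiOn.add_le_add_of_le {b : ℕ → ℕ} {s : ℕ} (hb : StrictAntiOn b (Set.Iio s))
    {j j' : ℕ} (hjj' : j ≤ j') (hj' : j' < s) : b j' + j' ≤ b j + j := by
  induction j', hjj' using Nat.le_induction with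
  | base => rfl
  | succ n _ ih =>
    have := hb (show n ∈ Set.Iio s by simp only [Set.mem_Iio]; omega) hj' n.lt_succ_self
    have := ih (by omega)
    omega

/-- The partition `γ = (b_1 - s, b_2 - s + 1, …, b_s - 1)` of the definition of `φ`,
0-indexed. -/
def phiGamma (s : ℕ) (b : ℕ → ℕ) (j : ℕ) : ℕ := if j < s then b j + j - s else 0

section phiGamma

variable {s : ℕ} {b : ℕ → ℕ}

theorem le_apply_add_of_strictAntiOn (hb : StrictAntiOn b (Set.Iio s))
    (hb1 : ∀ j, j < s → 1 ≤ b j) {j : ℕ} (hj : j < s) : s ≤ b j + j := by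
  have := hb.add_le_add_of_le (Nat.le_sub_one_of_lt hj) (Nat.sub_one_lt_of_lt hj)
  have := hb1 (s - 1) (by omega)
  omega

theorem isPartition_phiGamma (hb : StrictAntiOn b (Set.Iio s)) :
    IsPartition (phiGamma s b) := by
  refine ⟨fun j j' hjj' => ?_, s, by simp [phiGamma]⟩
  by_cases hj' : j' < s
  · have := hb.add_le_add_of_le hjj' hj'
    simp only [phiGamma, hj', hjj'.trans_lt hj', if_true]
    omega
  · simp [phiGamma, hj']

theorem mem_shiftedParts_phiGamma_iff (hb : StrictAntiOn b (Set.Iio s))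
    (hb1 : ∀ j, j < s → 1 ≤ b j) (v : ℤ) :
    v ∈ shiftedParts (phiGamma s b) ↔ (∃ j < s, (b j : ℤ) - s = v) ∨ v ≤ -s := by
  constructor
  · rintro ⟨j, rfl⟩
    by_cases hj : j < s
    · have := le_apply_add_of_strictAntiOn hb hb1 hj
      exact .inl ⟨j, hj, by simp only [phiGamma, hj, if_true]; omega⟩
    · exact .inr (by simp only [phiGamma, hj, if_false]; omega)
  · rintro (⟨j, hj, rfl⟩ | hv)
    · have := le_apply_add_of_strictAntiOn hb hb1 hj
      exact ⟨j, by simp only [phiGamma, hj, if_true]; omega⟩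
    · exact ⟨(-v).toNat, by simp only [phiGamma, show ¬(-v).toNat < s by omega, if_false]; omega⟩

end phiGamma

namespace PhiImage

variable {r s : ℕ} {a b μ : ℕ → ℕ}

theorem apply_add (hφ : PhiImage r s a b μ) (k : ℕ) : μ (r + k) = conj (phiGamma s b) k := by
  rw [hφ.2 (r + k) (by omega), conj]
  congr 1
  ext j
  by_cases hj : j < s
  · simp only [Set.mem_ofPred_eq, phiGamma, hj, if_true, true_and]
    omega
  · simp [phiGamma, hj]

theorem mem_shiftedParts_iff (hφ : PhiImage r s a b μ) (hb : StrictAntiOn b (Set.Iio s))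
    (hb1 : ∀ j, j < s → 1 ≤ b j) (v : ℤ) :
    v + s - r ∈ shiftedParts μ ↔
      (∃ i < r, (a i : ℤ) + 1 = v) ∨ (v ≤ 0 ∧ ∀ j < s, (b j : ℤ) ≠ 1 - v) := by
  have htail : v + s ∈ shiftedParts (conj (phiGamma s b)) ↔
      v ≤ 0 ∧ ∀ j < s, (b j : ℤ) ≠ 1 - v := by
    rw [(isPartition_phiGamma hb).mem_shiftedParts_conj_iff, mem_shiftedParts_phiGamma_iff hb hb1]
    push Not
    exact ⟨fun ⟨h1, h2⟩ => ⟨by omega, fun j hj hbj => h1 j hj (by omega)⟩,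
      fun ⟨h1, h2⟩ => ⟨fun j hj hbj => h2 j hj (by omega), by omega⟩⟩
  rw [← htail]
  constructor
  · rintro ⟨i, hi⟩
    rcases lt_or_ge i r with hir | hir
    · have := hφ.1 i hir
      exact .inl ⟨i, hir, by omega⟩
    · obtain ⟨k, rfl⟩ := Nat.exists_eq_add_of_le hir
      rw [hφ.apply_add] at hi
      exact .inr ⟨k, by push_cast at hi; omega⟩
  · rintro (⟨i, hir, rfl⟩ | ⟨k, hk⟩)
    · have := hφ.1 i hir
      exact ⟨i, by omega⟩
    · exact ⟨r + k, by rw [hφ.apply_add]; push_cast; omega⟩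

theorem mem_shiftedParts_iff_of_nonneg (hφ : PhiImage r s a b μ) (hb : StrictAntiOn b (Set.Iio s))
    (hb1 : ∀ j, j < s → 1 ≤ b j) {k : ℤ} (hk : 0 ≤ k) :
    k + 1 + s - r ∈ shiftedParts μ ↔ ∃ i < r, (a i : ℤ) = k := by
  rw [hφ.mem_shiftedParts_iff hb hb1]
  exact ⟨fun h => h.elim (fun ⟨i, hi, he⟩ => ⟨i, hi, by omega⟩) fun h => by omega,
    fun ⟨i, hi, he⟩ => .inl ⟨i, hi, by omega⟩⟩

theorem mem_shiftedParts_iff_of_pos (hφ : PhiImage r s a b μ) (hb : StrictAntiOn b (Set.Iio s))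
    (hb1 : ∀ j, j < s → 1 ≤ b j) {k : ℤ} (hk : 1 ≤ k) :
    1 - k + s - r ∈ shiftedParts μ ↔ ¬∃ j < s, (b j : ℤ) = k := by
  rw [hφ.mem_shiftedParts_iff hb hb1]
  push Not
  exact ⟨fun h => h.elim (fun ⟨i, _, he⟩ => by omega) fun ⟨_, h⟩ j hj => h j hj ∘ by omega,
    fun h => .inr ⟨by omega, fun j hj => h j hj ∘ by omega⟩⟩

end PhiImage

theorem SelfConj.hookLen_self {l : ℕ → ℕ} (hsc : SelfConj l) {i : ℕ} (hi : i < l i) :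
    (hookLen l i i : ℤ) = 2 * ((l i : ℤ) - i) - 1 := by
  unfold hookLen
  rw [hsc]
  omega

theorem SelfConj.add_one_mem_shiftedParts_iff {l : ℕ → ℕ} (hsc : SelfConj l) (n : ℕ) :
    (n : ℤ) + 1 ∈ shiftedParts l ↔ 2 * n + 1 ∈ Dset l := by
  constructor
  · rintro ⟨i, hi⟩
    have hil : i < l i := by omega
    have := hsc.hookLen_self hil
    exact ⟨i, hil, by omega⟩
  · rintro ⟨i, hil, hi⟩
    have := hsc.hookLen_self hil
    exact ⟨i, by omega⟩

namespace DiagPair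

variable {l μ : ℕ → ℕ} {r s : ℕ} {a b : ℕ → ℕ}

theorem two_mul_add_one_mem_iff (hd : DiagPair l r s a b) (hsc : SelfConj l) {k : ℤ}
    (hk : 0 ≤ k) : 2 * k + 1 ∈ shiftedParts l ↔ ∃ i < r, (a i : ℤ) = k := by
  lift k to ℕ using hk
  obtain ⟨-, -, -, hD1, -⟩ := hd
  calc 2 * (k : ℤ) + 1 ∈ shiftedParts l ↔ 4 * k + 1 ∈ D1 l := by
        rw [show 2 * (k : ℤ) + 1 = ((2 * k : ℕ) : ℤ) + 1 by push_cast; ring,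
          hsc.add_one_mem_shiftedParts_iff, show 2 * (2 * k) + 1 = 4 * k + 1 by ring]
        exact (and_iff_left (by omega)).symm
    _ ↔ ∃ i < r, (a i : ℤ) = k := by
        rw [hD1]
        exact exists_congr fun i => and_congr_right fun _ => by omega

theorem two_mul_mem_iff (hd : DiagPair l r s a b) (hsc : SelfConj l) {k : ℤ}
    (hk : 1 ≤ k) : 2 * k ∈ shiftedParts l ↔ ∃ j < s, (b j : ℤ) = k := by
  obtain ⟨n, rfl⟩ : ∃ n : ℕ, k = n + 1 := ⟨(k - 1).toNat, by omega⟩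
  obtain ⟨-, -, -, -, hD3⟩ := hd
  calc 2 * ((n : ℤ) + 1) ∈ shiftedParts l ↔ 4 * n + 3 ∈ D3 l := by
        rw [show 2 * ((n : ℤ) + 1) = ((2 * n + 1 : ℕ) : ℤ) + 1 by push_cast; ring,
          hsc.add_one_mem_shiftedParts_iff, show 2 * (2 * n + 1) + 1 = 4 * n + 3 by ring]
        exact (and_iff_left (by omega)).symm
    _ ↔ ∃ j < s, (b j : ℤ) = n + 1 := by
        rw [hD3]
        exact exists_congr fun j => and_congr_right fun _ => by omega

theorem neg_two_mul_mem_iff (hd : DiagPair l r s a b) (hl : IsPartition l)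
    (hsc : SelfConj l) {k : ℤ} (hk : 0 ≤ k) :
    -(2 * k) ∈ shiftedParts l ↔ ¬∃ i < r, (a i : ℤ) = k := by
  rw [hl.mem_shiftedParts_iff, hsc, ← hd.two_mul_add_one_mem_iff hsc hk, sub_neg_eq_add, add_comm]

theorem one_sub_two_mul_mem_iff (hd : DiagPair l r s a b) (hl : IsPartition l)
    (hsc : SelfConj l) {k : ℤ} (hk : 1 ≤ k) :
    1 - 2 * k ∈ shiftedParts l ↔ ¬∃ j < s, (b j : ℤ) = k := by
  rw [hl.mem_shiftedParts_iff, hsc, ← hd.two_mul_mem_iff hsc hk, sub_sub_cancel]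

theorem zero_lt_and_a_zero_eq (hd : DiagPair l r s a b) (hl : IsPartition l)
    (hsc : SelfConj l) {m : ℕ} (hm : l 0 = 2 * m + 1) : 0 < r ∧ a 0 = m := by
  obtain ⟨i, hir, hai⟩ := (hd.two_mul_add_one_mem_iff hsc (Int.natCast_nonneg m)).1
    ⟨0, by push_cast [hm]; ring⟩
  have hr : 0 < r := by omega
  have hle : a i ≤ a 0 := hd.1.antitoneOn hr hir (Nat.zero_le i)
  have hge := hl.le_of_mem_shiftedParts
    ((hd.two_mul_add_one_mem_iff hsc (Int.natCast_nonneg (a 0))).2 ⟨0, hr, rfl⟩)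
  omega

theorem zero_lt_and_b_zero_eq (hd : DiagPair l r s a b) (hl : IsPartition l)
    (hsc : SelfConj l) {m : ℕ} (hm : l 0 = 2 * m) (hm0 : 0 < m) : 0 < s ∧ b 0 = m := by
  obtain ⟨j, hjs, hbj⟩ := (hd.two_mul_mem_iff hsc (k := m) (by omega)).1 ⟨0, by push_cast [hm]; ring⟩
  have hs : 0 < s := by omega
  have hle : b j ≤ b 0 := hd.2.1.antitoneOn hs hjs (Nat.zero_le j)
  have hge := hl.le_of_mem_shiftedParts
    ((hd.two_mul_mem_iff hsc (k := b 0) (by have := hd.2.2.1 0 hs; omega)).2 ⟨0, hs, rfl⟩)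
  omega

theorem halfEvenBeta_eq_beta_conj (hd : DiagPair l r s a b) (hφ : PhiImage r s a b μ)
    (hl : IsPartition l) (hsc : SelfConj l) (hμ : IsPartition μ) {m : ℕ}
    (hm : l 0 = 2 * m + 1) : halfEvenBeta l = beta (conj μ) := by
  obtain ⟨hr, ha0⟩ := hd.zero_lt_and_a_zero_eq hl hsc hm
  have hμ0 := hφ.1 0 hr
  have hl0 : conj l 0 = l 0 := by rw [hsc]
  ext x
  rw [hl.mem_halfEvenBeta_iff, hμ.conj.mem_beta_iff, hμ.conj_conj, hμ.mem_shiftedParts_conj_iff]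
  rcases le_or_gt x m with hx | hx
  · rw [show 2 * (x : ℤ) + 1 - conj l 0 = -(2 * ((m : ℤ) - x)) by omega,
      show 1 - ((x : ℤ) + 1 - μ 0) = (m - x) + 1 + s - r by omega,
      hd.neg_two_mul_mem_iff hl hsc (by omega),
      hφ.mem_shiftedParts_iff_of_nonneg hd.2.1 hd.2.2.1 (by omega)]
  · rw [show 2 * (x : ℤ) + 1 - conj l 0 = 2 * ((x : ℤ) - m) by omega,
      show 1 - ((x : ℤ) + 1 - μ 0) = 1 - (x - m) + s - r by omega,
      hd.two_mul_mem_iff hsc (by omega),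
      hφ.mem_shiftedParts_iff_of_pos hd.2.1 hd.2.2.1 (by omega), not_not]

theorem halfEvenBeta_eq_beta (hd : DiagPair l r s a b) (hφ : PhiImage r s a b μ)
    (hl : IsPartition l) (hsc : SelfConj l) (hμ : IsPartition μ) {m : ℕ}
    (hm : l 0 = 2 * m) (hm0 : 0 < m) : halfEvenBeta l = beta μ := by
  obtain ⟨hs, hb0⟩ := hd.zero_lt_and_b_zero_eq hl hsc hm hm0
  have hμ0 : (conj μ 0 : ℤ) = m + r - s := by
    refine hμ.conj_zero_eq_of ?_ fun u hu => ?_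
    · rw [show 1 - ((m : ℤ) + r - s) = 1 - m + s - r by ring,
        hφ.mem_shiftedParts_iff_of_pos hd.2.1 hd.2.2.1 (by omega), not_not]
      exact ⟨0, hs, by rw [hb0]⟩
    · rw [show u = 1 - (s - r + 1 - u) + s - r by ring,
        hφ.mem_shiftedParts_iff_of_pos hd.2.1 hd.2.2.1 (by omega)]
      rintro ⟨j, hj, hbj⟩
      have := hd.2.1.antitoneOn hs hj (Nat.zero_le j)
      omega
  have hl0 : conj l 0 = l 0 := by rw [hsc]
  ext x
  rw [hl.mem_halfEvenBeta_iff, hμ.mem_beta_iff, hμ0]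
  rcases le_or_gt m x with hx | hx
  · rw [show 2 * (x : ℤ) + 1 - conj l 0 = 2 * ((x : ℤ) - m) + 1 by omega,
      show (x : ℤ) + 1 - (m + r - s) = (x - m) + 1 + s - r by ring,
      hd.two_mul_add_one_mem_iff hsc (by omega),
      hφ.mem_shiftedParts_iff_of_nonneg hd.2.1 hd.2.2.1 (by omega)]
  · rw [show 2 * (x : ℤ) + 1 - conj l 0 = 1 - 2 * ((m : ℤ) - x) by omega,
      show (x : ℤ) + 1 - (m + r - s) = 1 - (m - x) + s - r by ring,
      hd.one_sub_two_mul_mem_iff hl hsc (by omega),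
      hφ.mem_shiftedParts_iff_of_pos hd.2.1 hd.2.2.1 (by omega)]

end DiagPair

theorem half_even_beta_set (l μ : ℕ → ℕ)
    (hl : IsPartition l) (hsc : SelfConj l) (hμ : IsPartition μ)
    (hcorr : Corresponds l μ) (h0 : 0 < l 0) :
    (hookLen l 0 0 % 4 = 1 →
      {x | ∃ i, i < conj l 0 ∧ Even (hookLen l i 0) ∧ x = hookLen l i 0 / 2} =
        {x | ∃ j, j < μ 0 ∧ x = hookLen μ 0 j}) ∧
    (hookLen l 0 0 % 4 = 3 →
      {x | ∃ i, i < conj l 0 ∧ Even (hookLen l i 0) ∧ x = hookLen l i 0 / 2} =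
        {x | ∃ i, i < conj μ 0 ∧ x = hookLen μ i 0}) := by
  obtain ⟨r, s, a, b, hd, hφ⟩ := hcorr
  have hδ : (hookLen l 0 0 : ℤ) = 2 * l 0 - 1 := by simpa using hsc.hookLen_self h0
  refine ⟨fun h1 => ?_, fun h3 => ?_⟩
  · rw [← hμ.beta_conj]
    exact hd.halfEvenBeta_eq_beta_conj hφ hl hsc hμ (m := l 0 / 2) (by omega)
  · exact hd.halfEvenBeta_eq_beta hφ hl hsc hμ (m := l 0 / 2) (by omega) (by omega)
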